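/- arXiv:1311.5196 — 5 statements merged into one kernel-verified Lean document; each statement's English description precedes it below -/
import Mathlib

section
/- If ρ, u are C¹ solutions of the system ρ_t + (ρu)_x = 0 and u_t + u u_x + c²ρ⁻³ρ_x = c c' ρ⁻², with ρ > 0 and c = c(x) a C¹ positive function, then S = u + c/ρ satisfies S_t + R S_x = (c'/(4c))(S² − R²), where R = u − c/ρ. -/
/-!
Differentiating S = u + c/ρ by the quotient rule and eliminating ρ_t and u_t with the two
equations of the system, every term cancels except c' u / ρ, and
(S + R)(S − R) = 2u · 2c/ρ rewrites c' u / ρ as (c'/(4c))(S² − R²).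
-/

namespace Chaplygin

variable {c c' ρ u ρx ρt ux ut : ℝ}

theorem transport_riemann_invariant (hρ : ρ ≠ 0)
    (hmass : ρt + u * ρx + ρ * ux = 0)
    (hmom : ut + u * ux + c ^ 2 * ρ⁻¹ ^ 3 * ρx = c * c' * ρ⁻¹ ^ 2) :
    (ut + (0 * ρ - c * ρt) / ρ ^ 2) + (u - c / ρ) * (ux + (c' * ρ - c * ρx) / ρ ^ 2)
      = c' * u / ρ := by
  have hut : ut = c * c' * ρ⁻¹ ^ 2 - u * ux - c ^ 2 * ρ⁻¹ ^ 3 * ρx := by linarith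
  have hρt : ρt = -(u * ρx) - ρ * ux := by linarith
  rw [hut, hρt]
  field_simp
  ring

theorem mul_div_eq_sq_sub_sq (hc : c ≠ 0) :
    c' * u / ρ = c' / (4 * c) * ((u + c / ρ) ^ 2 - (u - c / ρ) ^ 2) := by
  field_simp
  ring

end Chaplygin

open Chaplygin in
theorem stmt2_general (T : ℝ)
    (c c' : ℝ → ℝ) (hc : ∀ x, HasDerivAt c (c' x) x) (hcpos : ∀ x, 0 < c x)
    (ρ u ρx ρt ux ut Sx St : ℝ → ℝ → ℝ)
    (hρpos : ∀ x t, 0 < ρ x t)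
    (hρx : ∀ x t, HasDerivAt (fun y => ρ y t) (ρx x t) x)
    (hρt : ∀ x t, HasDerivAt (fun s => ρ x s) (ρt x t) t)
    (hux : ∀ x t, HasDerivAt (fun y => u y t) (ux x t) x)
    (hut : ∀ x t, HasDerivAt (fun s => u x s) (ut x t) t)
    (hmass : ∀ x t, t ∈ Set.Ico 0 T →
      ρt x t + u x t * ρx x t + ρ x t * ux x t = 0)
    (hmom : ∀ x t, t ∈ Set.Ico 0 T →
      ut x t + u x t * ux x t + (c x) ^ 2 * (ρ x t)⁻¹ ^ 3 * ρx x t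
        = c x * c' x * (ρ x t)⁻¹ ^ 2)
    (hSx : ∀ x t, HasDerivAt (fun y => u y t + c y / ρ y t) (Sx x t) x)
    (hSt : ∀ x t, HasDerivAt (fun s => u x s + c x / ρ x s) (St x t) t) :
    ∀ x t, t ∈ Set.Ico 0 T →
      St x t + (u x t - c x / ρ x t) * Sx x t
        = c' x / (4 * c x) *
          ((u x t + c x / ρ x t) ^ 2 - (u x t - c x / ρ x t) ^ 2) := by
  intro x t ht
  have hρ : ρ x t ≠ 0 := (hρpos x t).ne'
  have hSx_eq := (hSx x t).unique ((hux x t).add ((hc x).div (hρx x t) hρ))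
  have hSt_eq := (hSt x t).unique ((hut x t).add ((hasDerivAt_const t (c x)).div (hρt x t) hρ))
  rw [hSx_eq, hSt_eq, transport_riemann_invariant hρ (hmass x t ht) (hmom x t ht),
    mul_div_eq_sq_sub_sq (hcpos x).ne']

/-- For C¹ solutions of the inhomogeneous Chaplygin system with ρ > 0,
the Riemann variable S = u + c/ρ satisfies
S_t + R S_x = (c'/(4c))(S² − R²), where R = u − c/ρ. -/
theorem stmt2 (T : ℝ) (hT : 0 < T)
    (c c' : ℝ → ℝ) (hc : ∀ x, HasDerivAt c (c' x) x) (hcpos : ∀ x, 0 < c x)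
    (ρ u ρx ρt ux ut Sx St : ℝ → ℝ → ℝ)
    (hρpos : ∀ x t, 0 < ρ x t)
    (hρx : ∀ x t, HasDerivAt (fun y => ρ y t) (ρx x t) x)
    (hρt : ∀ x t, HasDerivAt (fun s => ρ x s) (ρt x t) t)
    (hux : ∀ x t, HasDerivAt (fun y => u y t) (ux x t) x)
    (hut : ∀ x t, HasDerivAt (fun s => u x s) (ut x t) t)
    (hmass : ∀ x t, t ∈ Set.Ico 0 T →
      ρt x t + u x t * ρx x t + ρ x t * ux x t = 0)
    (hmom : ∀ x t, t ∈ Set.Ico 0 T →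
      ut x t + u x t * ux x t + (c x) ^ 2 * (ρ x t)⁻¹ ^ 3 * ρx x t
        = c x * c' x * (ρ x t)⁻¹ ^ 2)
    (hSx : ∀ x t, HasDerivAt (fun y => u y t + c y / ρ y t) (Sx x t) x)
    (hSt : ∀ x t, HasDerivAt (fun s => u x s + c x / ρ x s) (St x t) t) :
    ∀ x t, t ∈ Set.Ico 0 T →
      St x t + (u x t - c x / ρ x t) * Sx x t
        = c' x / (4 * c x) *
          ((u x t + c x / ρ x t) ^ 2 - (u x t - c x / ρ x t) ^ 2) :=
  stmt2_general T c c' hc hcpos ρ u ρx ρt ux ut Sx St hρpos hρx hρt hux hut hmass hmom hSx hSt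
end

section
/- If ρ, u are C¹ solutions of the system ρ_t + (ρu)_x = 0 and u_t + u u_x + c²ρ⁻³ρ_x = c c' ρ⁻², with ρ > 0 and c = c(x) a C¹ positive function, then R = u − c/ρ satisfies R_t + S R_x = (c'/(4c))(R² − S²), where S = u + c/ρ. -/
/-!
Along the characteristics of speed `S = u + c/ρ` the Riemann variable `R = u - c/ρ` changes at
rate `R_t + S R_x = (u_t + u u_x + c² ρ⁻³ ρ_x) + (c/ρ²)(ρ_t + u ρ_x + ρ u_x) - c c'/ρ² - c' u/ρ`.
The momentum equation turns the first bracket into `c c'/ρ²`, the mass equation kills the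
second, so the rate is `-c' u/ρ`, which is `(c'/(4c))(R² - S²)` because `R² - S² = -4uc/ρ`.
-/

theorem hasDerivAt_sub_div {u c ρ : ℝ → ℝ} {u' c' ρ' x : ℝ} (hu : HasDerivAt u u' x)
    (hc : HasDerivAt c c' x) (hρ : HasDerivAt ρ ρ' x) (hρx : ρ x ≠ 0) :
    HasDerivAt (fun y => u y - c y / ρ y) (u' - c' / ρ x + c x * ρ' / ρ x ^ 2) x :=
  (hu.sub (hc.div hρ hρx)).congr_deriv (by field_simp; ring)

theorem hasDerivAt_sub_const_div {u ρ : ℝ → ℝ} {u' ρ' t : ℝ} (a : ℝ) (hu : HasDerivAt u u' t)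
    (hρ : HasDerivAt ρ ρ' t) (hρt : ρ t ≠ 0) :
    HasDerivAt (fun s => u s - a / ρ s) (u' + a * ρ' / ρ t ^ 2) t := by
  simpa using hasDerivAt_sub_div hu (hasDerivAt_const t a) hρ hρt

theorem riemann_transport_eq {ρ u c c' ρx ρt ux ut : ℝ} (hρ : ρ ≠ 0)
    (hmass : ρt + u * ρx + ρ * ux = 0)
    (hmom : ut + u * ux + c ^ 2 * ρ⁻¹ ^ 3 * ρx = c * c' * ρ⁻¹ ^ 2) :
    (ut + c * ρt / ρ ^ 2) + (u + c / ρ) * (ux - c' / ρ + c * ρx / ρ ^ 2) = -(c' * u / ρ) := by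
  field_simp at hmom ⊢
  linear_combination hmom + c * ρ * hmass

theorem sq_sub_sq_riemann_source {ρ u c c' : ℝ} (hc : c ≠ 0) :
    c' / (4 * c) * ((u - c / ρ) ^ 2 - (u + c / ρ) ^ 2) = -(c' * u / ρ) := by
  field_simp
  ring

theorem stmt3_general (T : ℝ)
    (c c' : ℝ → ℝ) (hc : ∀ x, HasDerivAt c (c' x) x) (hcpos : ∀ x, 0 < c x)
    (ρ u ρx ρt ux ut Rx Rt : ℝ → ℝ → ℝ)
    (hρpos : ∀ x t, 0 < ρ x t)
    (hρx : ∀ x t, HasDerivAt (fun y => ρ y t) (ρx x t) x)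
    (hρt : ∀ x t, HasDerivAt (fun s => ρ x s) (ρt x t) t)
    (hux : ∀ x t, HasDerivAt (fun y => u y t) (ux x t) x)
    (hut : ∀ x t, HasDerivAt (fun s => u x s) (ut x t) t)
    (hmass : ∀ x t, t ∈ Set.Ico 0 T →
      ρt x t + u x t * ρx x t + ρ x t * ux x t = 0)
    (hmom : ∀ x t, t ∈ Set.Ico 0 T →
      ut x t + u x t * ux x t + (c x) ^ 2 * (ρ x t)⁻¹ ^ 3 * ρx x t
        = c x * c' x * (ρ x t)⁻¹ ^ 2)
    (hRx : ∀ x t, HasDerivAt (fun y => u y t - c y / ρ y t) (Rx x t) x)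
    (hRt : ∀ x t, HasDerivAt (fun s => u x s - c x / ρ x s) (Rt x t) t) :
    ∀ x t, t ∈ Set.Ico 0 T →
      Rt x t + (u x t + c x / ρ x t) * Rx x t
        = c' x / (4 * c x) *
          ((u x t - c x / ρ x t) ^ 2 - (u x t + c x / ρ x t) ^ 2) := by
  intro x t ht
  have hρ : ρ x t ≠ 0 := (hρpos x t).ne'
  have hRx_eq : Rx x t = ux x t - c' x / ρ x t + c x * ρx x t / ρ x t ^ 2 :=
    (hRx x t).unique (hasDerivAt_sub_div (hux x t) (hc x) (hρx x t) hρ)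
  have hRt_eq : Rt x t = ut x t + c x * ρt x t / ρ x t ^ 2 :=
    (hRt x t).unique (hasDerivAt_sub_const_div (c x) (hut x t) (hρt x t) hρ)
  rw [hRx_eq, hRt_eq, riemann_transport_eq hρ (hmass x t ht) (hmom x t ht),
    sq_sub_sq_riemann_source (hcpos x).ne']

/-- For C¹ solutions of the inhomogeneous Chaplygin system with ρ > 0,
the Riemann variable R = u − c/ρ satisfies
R_t + S R_x = (c'/(4c))(R² − S²), where S = u + c/ρ. -/
theorem stmt3 (T : ℝ) (hT : 0 < T)
    (c c' : ℝ → ℝ) (hc : ∀ x, HasDerivAt c (c' x) x) (hcpos : ∀ x, 0 < c x)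
    (ρ u ρx ρt ux ut Rx Rt : ℝ → ℝ → ℝ)
    (hρpos : ∀ x t, 0 < ρ x t)
    (hρx : ∀ x t, HasDerivAt (fun y => ρ y t) (ρx x t) x)
    (hρt : ∀ x t, HasDerivAt (fun s => ρ x s) (ρt x t) t)
    (hux : ∀ x t, HasDerivAt (fun y => u y t) (ux x t) x)
    (hut : ∀ x t, HasDerivAt (fun s => u x s) (ut x t) t)
    (hmass : ∀ x t, t ∈ Set.Ico 0 T →
      ρt x t + u x t * ρx x t + ρ x t * ux x t = 0)
    (hmom : ∀ x t, t ∈ Set.Ico 0 T →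
      ut x t + u x t * ux x t + (c x) ^ 2 * (ρ x t)⁻¹ ^ 3 * ρx x t
        = c x * c' x * (ρ x t)⁻¹ ^ 2)
    (hRx : ∀ x t, HasDerivAt (fun y => u y t - c y / ρ y t) (Rx x t) x)
    (hRt : ∀ x t, HasDerivAt (fun s => u x s - c x / ρ x s) (Rt x t) t) :
    ∀ x t, t ∈ Set.Ico 0 T →
      Rt x t + (u x t + c x / ρ x t) * Rx x t
        = c' x / (4 * c x) *
          ((u x t - c x / ρ x t) ^ 2 - (u x t + c x / ρ x t) ^ 2) :=
  stmt3_general T c c' hc hcpos ρ u ρx ρt ux ut Rx Rt hρpos hρx hρt hux hut hmass hmom hRx hRt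
end

section
/- For C¹ solutions of the inhomogeneous Chaplygin system with ρ > 0, the quantity ρ(S² + R²) satisfies the conservation law (ρ(S² + R²))_t + (ρ(S²R + R²S))_x = 0, where S = u + c/ρ and R = u − c/ρ. -/
/-!
Write `E = ρ(S² + R²)` and `q = ρ(S²R + R²S)`. The product rule regroups
`E_t + q_x = S²(ρ_t + (ρR)_x) + R²(ρ_t + (ρS)_x) + 2ρS(S_t + R S_x) + 2ρR(R_t + S R_x)`.
Since `ρS = ρu + c` and `ρR = ρu - c`, the mass equation gives `ρ_t + (ρS)_x = c'` and
`ρ_t + (ρR)_x = -c'`, so with the Riemann-invariant equations the right-hand side becomes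
`(c'/(4c)) · 2ρ(S - R)(S² - R²) - c'(S² - R²)`, which vanishes because `ρ(S - R) = 2c`.
-/

section Calculus

variable {𝕜 : Type*} [NontriviallyNormedField 𝕜] {a : 𝕜}

theorem HasDerivAt.mul_sq_add_sq {f g h : 𝕜 → 𝕜} {f' g' h' : 𝕜}
    (hf : HasDerivAt f f' a) (hg : HasDerivAt g g' a) (hh : HasDerivAt h h' a) :
    HasDerivAt (fun s => f s * (g s ^ 2 + h s ^ 2))
      (f' * (g a ^ 2 + h a ^ 2) + f a * (2 * g a * g' + 2 * h a * h')) a :=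
  (hf.fun_mul ((hg.fun_pow 2).fun_add (hh.fun_pow 2))).congr_deriv
    (by simp only [Nat.cast_ofNat, Nat.reduceSub, pow_one])

theorem HasDerivAt.mul_sq_mul_add_sq_mul {f g h : 𝕜 → 𝕜} {f' g' h' : 𝕜}
    (hf : HasDerivAt f f' a) (hg : HasDerivAt g g' a) (hh : HasDerivAt h h' a) :
    HasDerivAt (fun s => f s * (g s ^ 2 * h s + h s ^ 2 * g s))
      (f' * (g a ^ 2 * h a + h a ^ 2 * g a)
        + f a * (2 * g a * g' * h a + g a ^ 2 * h' + 2 * h a * h' * g a + h a ^ 2 * g')) a := by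
  refine (hf.fun_mul (((hg.fun_pow 2).fun_mul hh).fun_add
    ((hh.fun_pow 2).fun_mul hg))).congr_deriv ?_
  simp only [Nat.cast_ofNat, Nat.reduceSub, pow_one]
  ring

theorem mul_deriv_eq_of_mul_eq_mul_add {ρ S u w : 𝕜 → 𝕜} {ρ' S' u' w' : 𝕜}
    (h : ∀ y, ρ y * S y = ρ y * u y + w y) (hρ : HasDerivAt ρ ρ' a)
    (hS : HasDerivAt S S' a) (hu : HasDerivAt u u' a) (hw : HasDerivAt w w' a) :
    ρ' * S a + ρ a * S' = ρ' * u a + ρ a * u' + w' := by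
  have hρu : HasDerivAt (fun y => ρ y * S y) (ρ' * u a + ρ a * u' + w') a := by
    simpa only [h] using (hρ.fun_mul hu).fun_add hw
  exact (hρ.fun_mul hS).unique hρu

end Calculus

theorem chaplygin_energy_flux_balance
    {ρ u S R c c' ρx ρt ux Sx St Rx Rt : ℝ} (hc : c ≠ 0)
    (hSR : ρ * (S - R) = 2 * c)
    (hmass : ρt + u * ρx + ρ * ux = 0)
    (hρSx : ρx * S + ρ * Sx = ρx * u + ρ * ux + c')
    (hρRx : ρx * R + ρ * Rx = ρx * u + ρ * ux - c')
    (hSeq : St + R * Sx = c' / (4 * c) * (S ^ 2 - R ^ 2))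
    (hReq : Rt + S * Rx = c' / (4 * c) * (R ^ 2 - S ^ 2)) :
    ρt * (S ^ 2 + R ^ 2) + ρ * (2 * S * St + 2 * R * Rt)
      + (ρx * (S ^ 2 * R + R ^ 2 * S)
        + ρ * (2 * S * Sx * R + S ^ 2 * Rx + 2 * R * Rx * S + R ^ 2 * Sx)) = 0 := by
  have hk : c' / (4 * c) * (2 * ρ * (S - R)) = c' := by
    rw [mul_assoc, hSR]
    field_simp
    ring
  linear_combination (S ^ 2 + R ^ 2) * hmass + S ^ 2 * hρRx + R ^ 2 * hρSx
    + 2 * ρ * S * hSeq + 2 * ρ * R * hReq + (S ^ 2 - R ^ 2) * hk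

theorem stmt4_general (T : ℝ)
    (c c' : ℝ → ℝ) (hc : ∀ x, HasDerivAt c (c' x) x) (hcpos : ∀ x, 0 < c x)
    (ρ u S R ρx ρt ux Sx St Rx Rt Et qx : ℝ → ℝ → ℝ)
    (hρpos : ∀ x t, 0 < ρ x t)
    (hS : ∀ x t, S x t = u x t + c x / ρ x t)
    (hR : ∀ x t, R x t = u x t - c x / ρ x t)
    (hρx : ∀ x t, HasDerivAt (fun y => ρ y t) (ρx x t) x)
    (hρt : ∀ x t, HasDerivAt (fun s => ρ x s) (ρt x t) t)
    (hux : ∀ x t, HasDerivAt (fun y => u y t) (ux x t) x)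
    (hSx : ∀ x t, HasDerivAt (fun y => S y t) (Sx x t) x)
    (hSt : ∀ x t, HasDerivAt (fun s => S x s) (St x t) t)
    (hRx : ∀ x t, HasDerivAt (fun y => R y t) (Rx x t) x)
    (hRt : ∀ x t, HasDerivAt (fun s => R x s) (Rt x t) t)
    (hmass : ∀ x t, t ∈ Set.Ico 0 T →
      ρt x t + u x t * ρx x t + ρ x t * ux x t = 0)
    (hSeq : ∀ x t, t ∈ Set.Ico 0 T →
      St x t + R x t * Sx x t
        = c' x / (4 * c x) * (S x t ^ 2 - R x t ^ 2))
    (hReq : ∀ x t, t ∈ Set.Ico 0 T →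
      Rt x t + S x t * Rx x t
        = c' x / (4 * c x) * (R x t ^ 2 - S x t ^ 2))
    (hEt : ∀ x t, HasDerivAt
      (fun s => ρ x s * (S x s ^ 2 + R x s ^ 2)) (Et x t) t)
    (hqx : ∀ x t, HasDerivAt
      (fun y => ρ y t * (S y t ^ 2 * R y t + R y t ^ 2 * S y t)) (qx x t) x) :
    ∀ x t, t ∈ Set.Ico 0 T → Et x t + qx x t = 0 := by
  intro x t ht
  have hρS : ∀ y, ρ y t * S y t = ρ y t * u y t + c y := fun y => by
    rw [hS, mul_add, mul_div_cancel₀ _ (hρpos y t).ne']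
  have hρR : ∀ y, ρ y t * R y t = ρ y t * u y t + -c y := fun y => by
    rw [hR, mul_sub, mul_div_cancel₀ _ (hρpos y t).ne', sub_eq_add_neg]
  rw [(hEt x t).unique ((hρt x t).mul_sq_add_sq (hSt x t) (hRt x t)),
    (hqx x t).unique ((hρx x t).mul_sq_mul_add_sq_mul (hSx x t) (hRx x t))]
  exact chaplygin_energy_flux_balance (hcpos x).ne'
    (by linear_combination hρS x - hρR x) (hmass x t ht)
    (mul_deriv_eq_of_mul_eq_mul_add (ρ := (ρ · t)) hρS (hρx x t) (hSx x t) (hux x t) (hc x))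
    (mul_deriv_eq_of_mul_eq_mul_add (ρ := (ρ · t)) hρR (hρx x t) (hRx x t) (hux x t)
      (hc x).neg)
    (hSeq x t ht) (hReq x t ht)

/-- For C¹ solutions with ρ > 0, the quantity ρ(S²+R²) satisfies
(ρ(S²+R²))_t + (ρ(S²R+R²S))_x = 0, where S = u + c/ρ, R = u − c/ρ. -/
theorem stmt4 (T : ℝ) (hT : 0 < T)
    (c c' : ℝ → ℝ) (hc : ∀ x, HasDerivAt c (c' x) x) (hcpos : ∀ x, 0 < c x)
    (ρ u S R ρx ρt ux Sx St Rx Rt Et qx : ℝ → ℝ → ℝ)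
    (hρpos : ∀ x t, 0 < ρ x t)
    (hS : ∀ x t, S x t = u x t + c x / ρ x t)
    (hR : ∀ x t, R x t = u x t - c x / ρ x t)
    (hρx : ∀ x t, HasDerivAt (fun y => ρ y t) (ρx x t) x)
    (hρt : ∀ x t, HasDerivAt (fun s => ρ x s) (ρt x t) t)
    (hux : ∀ x t, HasDerivAt (fun y => u y t) (ux x t) x)
    (hSx : ∀ x t, HasDerivAt (fun y => S y t) (Sx x t) x)
    (hSt : ∀ x t, HasDerivAt (fun s => S x s) (St x t) t)
    (hRx : ∀ x t, HasDerivAt (fun y => R y t) (Rx x t) x)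
    (hRt : ∀ x t, HasDerivAt (fun s => R x s) (Rt x t) t)
    (hmass : ∀ x t, t ∈ Set.Ico 0 T →
      ρt x t + u x t * ρx x t + ρ x t * ux x t = 0)
    (hSeq : ∀ x t, t ∈ Set.Ico 0 T →
      St x t + R x t * Sx x t
        = c' x / (4 * c x) * (S x t ^ 2 - R x t ^ 2))
    (hReq : ∀ x t, t ∈ Set.Ico 0 T →
      Rt x t + S x t * Rx x t
        = c' x / (4 * c x) * (R x t ^ 2 - S x t ^ 2))
    (hEt : ∀ x t, HasDerivAt
      (fun s => ρ x s * (S x s ^ 2 + R x s ^ 2)) (Et x t) t)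
    (hqx : ∀ x t, HasDerivAt
      (fun y => ρ y t * (S y t ^ 2 * R y t + R y t ^ 2 * S y t)) (qx x t) x) :
    ∀ x t, t ∈ Set.Ico 0 T → Et x t + qx x t = 0 :=
  stmt4_general T c c' hc hcpos ρ u S R ρx ρt ux Sx St Rx Rt Et qx hρpos hS hR hρx hρt hux hSx hSt
    hRx hRt hmass hSeq hReq hEt hqx
end

section
/- Fix 0 < ε < 1 and α ∈ [0,1). With c(x) = 3 + ε^α x on [−1,1] and initial data ρ₀(x) = 1, u₀(x) = c(x) − ε^{α+1} on [−ε, ε], the initial energy satisfies ∫_{−1}^{1} ρ₀⁻¹((c − ρ₀ ε^{α+1})² + c²) dx ≤ K ε for ρ₀ as in the duct-flow construction, for some constant K independent of ε, where ρ₀ = ε^{−α−1} outside [−2ε, 2ε], ρ₀ = 1 on [−ε,ε], and ρ₀ between 1 and ε^{−α−1} on the transition intervals. -/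
open MeasureTheory Set

/-! On `(-1, 1]` the density satisfies `1 ≤ ρ₀ ≤ ε^{-(α+1)}` and `c ∈ [2, 4]`, so the bracket
`(c - ρ₀ ε^{α+1})² + c²` is at most `32` and the integrand at most `32 / ρ₀`. Away from
`[-2ε, 2ε]` we have `1 / ρ₀ = ε^{α+1} ≤ ε`, and on `[-2ε, 2ε]`, an interval of length `4ε`,
we have `1 / ρ₀ ≤ 1`. Hence the integral is at most `32ε · 2 + 32 · 4ε = 192ε`. -/

theorem integral_le_of_le_add_indicator {X : Type*} [MeasurableSpace X] {μ : Measure X}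
    [IsFiniteMeasure μ] {f : X → ℝ} {t : Set X} {a b : ℝ} (ht : MeasurableSet t)
    (hf₀ : 0 ≤ᵐ[μ] f) (hf : ∀ᵐ x ∂μ, f x ≤ a + t.indicator (fun _ => b) x) :
    ∫ x, f x ∂μ ≤ μ.real univ * a + μ.real t * b := by
  have h_ind : Integrable (t.indicator fun _ => b) μ :=
    (integrable_indicator_iff ht).2 (integrable_const b).integrableOn
  calc ∫ x, f x ∂μ ≤ ∫ x, a + t.indicator (fun _ => b) x ∂μ :=
        integral_mono_of_nonneg hf₀ ((integrable_const a).add h_ind) hf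
    _ = μ.real univ * a + μ.real t * b := by
      rw [integral_add (integrable_const a) h_ind, integral_const, integral_indicator_const b ht,
        smul_eq_mul, smul_eq_mul]

theorem inv_mul_sq_sub_add_sq_le {c ρ p : ℝ} (hc₂ : 2 ≤ c) (hc₄ : c ≤ 4) (hρ : 0 ≤ ρ)
    (hp : 0 ≤ p) (hρp : ρ * p ≤ 1) : ρ⁻¹ * ((c - ρ * p) ^ 2 + c ^ 2) ≤ 32 * ρ⁻¹ := by
  have hρp₀ : 0 ≤ ρ * p := by positivity
  rw [mul_comm 32]
  gcongr
  nlinarith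

theorem three_add_mul_mem_Icc {s x : ℝ} (hs₀ : 0 ≤ s) (hs₁ : s ≤ 1) (hx : x ∈ Icc (-1) 1) :
    3 + s * x ∈ Icc 2 4 := by
  obtain ⟨hx₁, hx₂⟩ := hx
  constructor <;> nlinarith

theorem one_le_rpow_neg_add_one {ε α : ℝ} (hε : 0 < ε) (hε₁ : ε < 1) (hα : 0 ≤ α) :
    1 ≤ ε ^ (-(α + 1)) :=
  Real.one_le_rpow_of_pos_of_le_one_of_nonpos hε hε₁.le (by linarith)

theorem rpow_add_one_le_self {ε α : ℝ} (hε : 0 < ε) (hε₁ : ε < 1) (hα : 0 ≤ α) :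
    ε ^ (α + 1) ≤ ε := by
  simpa using Real.rpow_le_rpow_of_exponent_ge hε hε₁.le (by linarith : (1 : ℝ) ≤ α + 1)

structure IsDuctDensity (ε α : ℝ) (ρ₀ : ℝ → ℝ) : Prop where
  eq_left : ∀ x ∈ Ico (-1 : ℝ) (-(2 * ε)), ρ₀ x = ε ^ (-(α + 1))
  eq_right : ∀ x ∈ Ioc (2 * ε) (1 : ℝ), ρ₀ x = ε ^ (-(α + 1))
  eq_mid : ∀ x ∈ Icc (-ε) ε, ρ₀ x = 1
  mem_left : ∀ x ∈ Ico (-(2 * ε)) (-ε), 1 ≤ ρ₀ x ∧ ρ₀ x ≤ ε ^ (-(α + 1))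
  mem_right : ∀ x ∈ Ioc ε (2 * ε), 1 ≤ ρ₀ x ∧ ρ₀ x ≤ ε ^ (-(α + 1))

namespace IsDuctDensity

variable {ε α : ℝ} {ρ₀ : ℝ → ℝ}

theorem mem_Icc (hρ : IsDuctDensity ε α ρ₀) (hε : 0 < ε) (hε₁ : ε < 1) (hα : 0 ≤ α)
    {x : ℝ} (hx : x ∈ Ioc (-1) 1) : 1 ≤ ρ₀ x ∧ ρ₀ x ≤ ε ^ (-(α + 1)) := by
  have h_one := one_le_rpow_neg_add_one hε hε₁ hα
  obtain ⟨hx₁, hx₂⟩ := hx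
  rcases lt_or_ge x (-(2 * ε)) with h₁ | h₁
  · rw [hρ.eq_left x ⟨hx₁.le, h₁⟩]; exact ⟨h_one, le_rfl⟩
  rcases lt_or_ge x (-ε) with h₂ | h₂
  · exact hρ.mem_left x ⟨h₁, h₂⟩
  rcases le_or_gt x ε with h₃ | h₃
  · rw [hρ.eq_mid x ⟨h₂, h₃⟩]; exact ⟨le_rfl, h_one⟩
  rcases le_or_gt x (2 * ε) with h₄ | h₄
  · exact hρ.mem_right x ⟨h₃, h₄⟩
  · rw [hρ.eq_right x ⟨h₄, hx₂⟩]; exact ⟨h_one, le_rfl⟩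

theorem inv_eq_of_notMem_Icc (hρ : IsDuctDensity ε α ρ₀) (hε : 0 < ε) {x : ℝ}
    (hx : x ∈ Ioc (-1) 1) (hx' : x ∉ Icc (-(2 * ε)) (2 * ε)) : (ρ₀ x)⁻¹ = ε ^ (α + 1) := by
  have h_eq : ρ₀ x = ε ^ (-(α + 1)) := by
    rcases lt_or_ge x (-(2 * ε)) with h | h
    · exact hρ.eq_left x ⟨hx.1.le, h⟩
    · exact hρ.eq_right x ⟨lt_of_not_ge fun h' => hx' ⟨h, h'⟩, hx.2⟩
  rw [h_eq, Real.rpow_neg hε.le, inv_inv]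

theorem energy_density_le (hρ : IsDuctDensity ε α ρ₀) (hε : 0 < ε) (hε₁ : ε < 1) (hα : 0 ≤ α)
    {x : ℝ} (hx : x ∈ Ioc (-1) 1) :
    (ρ₀ x)⁻¹ * ((3 + ε ^ α * x - ρ₀ x * ε ^ (α + 1)) ^ 2 + (3 + ε ^ α * x) ^ 2) ≤
      32 * ε + (Icc (-(2 * ε)) (2 * ε)).indicator (fun _ => 32) x := by
  obtain ⟨hρ₁, hρ_le⟩ := hρ.mem_Icc hε hε₁ hα hx
  have hp : 0 < ε ^ (α + 1) := Real.rpow_pos_of_pos hε _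
  have hρp : ρ₀ x * ε ^ (α + 1) ≤ 1 := by
    calc ρ₀ x * ε ^ (α + 1) ≤ ε ^ (-(α + 1)) * ε ^ (α + 1) := by gcongr
      _ = 1 := by rw [Real.rpow_neg hε.le, inv_mul_cancel₀ hp.ne']
  obtain ⟨hc₂, hc₄⟩ := three_add_mul_mem_Icc (Real.rpow_nonneg hε.le α)
    (Real.rpow_le_one hε.le hε₁.le hα) (Ioc_subset_Icc_self hx)
  refine (inv_mul_sq_sub_add_sq_le hc₂ hc₄ (by linarith) hp.le hρp).trans ?_
  by_cases hx' : x ∈ Icc (-(2 * ε)) (2 * ε)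
  · rw [indicator_of_mem hx']
    have : (ρ₀ x)⁻¹ ≤ 1 := inv_le_one_of_one_le₀ hρ₁
    linarith
  · rw [indicator_of_notMem hx', hρ.inv_eq_of_notMem_Icc hε hx hx']
    linarith [rpow_add_one_le_self hε hε₁ hα]

end IsDuctDensity

/-- With c(x) = 3 + ε^α x on [−1,1] and the duct-flow initial density ρ₀
(equal to ε^{−α−1} outside [−2ε,2ε], equal to 1 on [−ε,ε], and between 1
and ε^{−α−1} on the transition intervals), the initial energy satisfies
∫_{−1}^{1} ρ₀⁻¹((c − ρ₀ε^{α+1})² + c²) dx ≤ Kε for an absolute constant K. -/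
theorem stmt15 :
    ∃ K : ℝ, 0 < K ∧ ∀ (ε α : ℝ), 0 < ε → ε < 1 → 0 ≤ α → α < 1 →
      ∀ ρ₀ : ℝ → ℝ, Measurable ρ₀ →
      (∀ x ∈ Set.Ico (-1 : ℝ) (-(2 * ε)), ρ₀ x = ε ^ (-(α + 1))) →
      (∀ x ∈ Set.Ioc (2 * ε) (1 : ℝ), ρ₀ x = ε ^ (-(α + 1))) →
      (∀ x ∈ Set.Icc (-ε) ε, ρ₀ x = 1) →
      (∀ x ∈ Set.Ico (-(2 * ε)) (-ε), 1 ≤ ρ₀ x ∧ ρ₀ x ≤ ε ^ (-(α + 1))) →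
      (∀ x ∈ Set.Ioc ε (2 * ε), 1 ≤ ρ₀ x ∧ ρ₀ x ≤ ε ^ (-(α + 1))) →
      (∫ x in (-1 : ℝ)..1, (ρ₀ x)⁻¹ *
          ((3 + ε ^ α * x - ρ₀ x * ε ^ (α + 1)) ^ 2 + (3 + ε ^ α * x) ^ 2))
        ≤ K * ε := by
  refine ⟨192, by norm_num, ?_⟩
  intro ε α hε hε₁ hα _ ρ₀ _ h_left h_right h_mid h_trans_left h_trans_right
  have hρ : IsDuctDensity ε α ρ₀ := ⟨h_left, h_right, h_mid, h_trans_left, h_trans_right⟩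
  set μ := volume.restrict (Ioc (-1 : ℝ) 1)
  have h_nonneg : ∀ᵐ x ∂μ, 0 ≤ (ρ₀ x)⁻¹ *
      ((3 + ε ^ α * x - ρ₀ x * ε ^ (α + 1)) ^ 2 + (3 + ε ^ α * x) ^ 2) :=
    ae_restrict_of_forall_mem measurableSet_Ioc fun x hx =>
      mul_nonneg (inv_nonneg.2 (by linarith [(hρ.mem_Icc hε hε₁ hα hx).1])) (by positivity)
  have h_core : μ.real (Icc (-(2 * ε)) (2 * ε)) ≤ 4 * ε := by
    rw [measureReal_restrict_apply measurableSet_Icc]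
    calc _ ≤ volume.real (Icc (-(2 * ε)) (2 * ε)) :=
          measureReal_mono inter_subset_left measure_Icc_lt_top.ne
      _ = 4 * ε := by rw [Real.volume_real_Icc_of_le (by linarith)]; ring
  rw [intervalIntegral.integral_of_le (by norm_num)]
  calc _ ≤ μ.real univ * (32 * ε) + μ.real (Icc (-(2 * ε)) (2 * ε)) * 32 :=
        integral_le_of_le_add_indicator measurableSet_Icc h_nonneg
          (ae_restrict_of_forall_mem measurableSet_Ioc fun x hx =>
            hρ.energy_density_le hε hε₁ hα hx)
    _ ≤ 2 * (32 * ε) + 4 * ε * 32 := by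
      rw [measureReal_restrict_apply_univ, Real.volume_real_Ioc_of_le (by norm_num)]
      linarith
    _ = 192 * ε := by ring
end

section
/- For C¹ solutions with ρ > 0, the gradient variable v = ρ⁻¹ S_x satisfies the linear transport equation v_t + R v_x = (c'/(2c))[(2cρ⁻¹ + S)v − Rw] + ((c''c − c'²)/(4c²))ρ⁻¹(S² − R²), where w = ρ⁻¹ R_x. -/
/-!
Differentiate the characteristic equation `S_t + R S_x = (c'/(4c))(S² − R²)` in `x`.
Since `S` is `C²`, `∂ₓ S_t = ∂_t S_x`, and writing `S_x = ρ v` turns the left side into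
`ρ (v_t + R v_x) + v (ρ_t + R ρ_x) + R_x S_x`. The continuity equation gives
`ρ_t + R ρ_x = -(ρ R_x + c')`, so the `R_x S_x` terms cancel and
`ρ (v_t + R v_x) = ∂ₓ((c'/(4c))(S² − R²)) + c' v`, which is the claimed equation.
-/

open Filter

section Slices

variable {F : Type*} [NormedAddCommGroup F] [NormedSpace ℝ F] {f : ℝ × ℝ → F} {x t : ℝ}

theorem DifferentiableAt.hasDerivAt_slice_fst (hf : DifferentiableAt ℝ f (x, t)) :
    HasDerivAt (fun y => f (y, t)) (fderiv ℝ f (x, t) (1, 0)) x :=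
  hf.hasFDerivAt.comp_hasDerivAt x ((hasDerivAt_id x).prodMk (hasDerivAt_const x t))

theorem DifferentiableAt.hasDerivAt_slice_snd (hf : DifferentiableAt ℝ f (x, t)) :
    HasDerivAt (fun s => f (x, s)) (fderiv ℝ f (x, t) (0, 1)) t :=
  hf.hasFDerivAt.comp_hasDerivAt t ((hasDerivAt_const t x).prodMk (hasDerivAt_id t))

theorem ContDiff.hasDerivAt_partial_comm (hf : ContDiff ℝ 2 f) {fx ft : ℝ → ℝ → F}
    (hfx : ∀ x t, HasDerivAt (fun y => f (y, t)) (fx x t) x)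
    (hft : ∀ x t, HasDerivAt (fun s => f (x, s)) (ft x t) t) {a : F}
    (ha : HasDerivAt (fun s => fx x s) a t) :
    HasDerivAt (fun y => ft y t) a x := by
  have hd : Differentiable ℝ f := hf.differentiable two_ne_zero
  have hD : Differentiable ℝ (fderiv ℝ f) :=
    (hf.fderiv_right (m := 1) (by norm_num)).differentiable one_ne_zero
  have hfx_eq : fx x = fun s => fderiv ℝ f (x, s) (1, 0) :=
    funext fun s => (hfx x s).unique (hd _).hasDerivAt_slice_fst
  have hft_eq : (fun y => ft y t) = fun y => fderiv ℝ f (y, t) (0, 1) :=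
    funext fun y => (hft y t).unique (hd _).hasDerivAt_slice_snd
  have hsnd :=
    (hD (x, t)).hasDerivAt_slice_snd.clm_apply (hasDerivAt_const t ((1 : ℝ), (0 : ℝ)))
  have hfst :=
    (hD (x, t)).hasDerivAt_slice_fst.clm_apply (hasDerivAt_const x ((0 : ℝ), (1 : ℝ)))
  simp only [map_zero, add_zero] at hsnd hfst
  rw [hfx_eq] at ha
  rw [hft_eq, ha.unique hsnd, (hf.contDiffAt.isSymmSndFDerivAt (by simp)).eq]
  exact hfst

end Slices

theorem HasDerivAt.of_inv_mul {𝕜 : Type*} [NontriviallyNormedField 𝕜] {f g : 𝕜 → 𝕜}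
    {g' a x : 𝕜} (hg : HasDerivAt g g' x) (hgx : g x ≠ 0)
    (h : HasDerivAt (fun y => (g y)⁻¹ * f y) a x) :
    HasDerivAt f (g' * ((g x)⁻¹ * f x) + g x * a) x :=
  (hg.mul h).congr_of_eventuallyEq <| (hg.continuousAt.eventually_ne hgx).mono
    fun y hy => (mul_inv_cancel_left₀ hy (f y)).symm

section RiemannInvariants

variable {c c' ρ u ρx ρt ux ut : ℝ}

-- `S_t + R S_x` for `S = u + c/ρ`, with `S_t` and `S_x` expanded by the quotient rule.
theorem riemannInvariant_add_characteristic (hc : c ≠ 0) (hρ : ρ ≠ 0)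
    (hmass : ρt + u * ρx + ρ * ux = 0)
    (hmom : ut + u * ux + c ^ 2 * ρ⁻¹ ^ 3 * ρx = c * c' * ρ⁻¹ ^ 2) :
    (ut - c * ρt / ρ ^ 2) + (u - c / ρ) * (ux + (c' * ρ - c * ρx) / ρ ^ 2)
      = c' / (4 * c) * ((u + c / ρ) ^ 2 - (u - c / ρ) ^ 2) := by
  have hut : ut = c * c' * ρ⁻¹ ^ 2 - u * ux - c ^ 2 * ρ⁻¹ ^ 3 * ρx := by linarith
  have hρt : ρt = -(u * ρx) - ρ * ux := by linarith
  rw [hut, hρt]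
  field_simp
  ring

-- `ρ_t + R ρ_x = -(ρ R_x + c')`, with `R_x` expanded by the quotient rule.
theorem density_transport_along_sub_characteristic (hρ : ρ ≠ 0)
    (hmass : ρt + u * ρx + ρ * ux = 0) :
    ρt + (u - c / ρ) * ρx = -(ρ * (ux - (c' * ρ - c * ρx) / ρ ^ 2) + c') := by
  field_simp
  linear_combination ρ * hmass

end RiemannInvariants

theorem stmt19_general
    (c c' c'' : ℝ → ℝ)
    (hcC2 : ContDiff ℝ 2 c)
    (hc : ∀ x, HasDerivAt c (c' x) x)
    (hc' : ∀ x, HasDerivAt c' (c'' x) x)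
    (hcpos : ∀ x, 0 < c x)
    (ρ u ρx ρt ux ut Sx Rx vt vx : ℝ → ℝ → ℝ)
    (hρC2 : ContDiff ℝ 2 (fun p : ℝ × ℝ => ρ p.1 p.2))
    (huC2 : ContDiff ℝ 2 (fun p : ℝ × ℝ => u p.1 p.2))
    (hρpos : ∀ x t, 0 < ρ x t)
    (hρx : ∀ x t, HasDerivAt (fun y => ρ y t) (ρx x t) x)
    (hρt : ∀ x t, HasDerivAt (fun s => ρ x s) (ρt x t) t)
    (hux : ∀ x t, HasDerivAt (fun y => u y t) (ux x t) x)
    (hut : ∀ x t, HasDerivAt (fun s => u x s) (ut x t) t)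
    (hmass : ∀ x t, ρt x t + u x t * ρx x t + ρ x t * ux x t = 0)
    (hmom : ∀ x t,
      ut x t + u x t * ux x t + c x ^ 2 * (ρ x t)⁻¹ ^ 3 * ρx x t
        = c x * c' x * (ρ x t)⁻¹ ^ 2)
    (hSx : ∀ x t, HasDerivAt (fun y => u y t + c y / ρ y t) (Sx x t) x)
    (hRx : ∀ x t, HasDerivAt (fun y => u y t - c y / ρ y t) (Rx x t) x)
    (hvt : ∀ x t, HasDerivAt (fun s => (ρ x s)⁻¹ * Sx x s) (vt x t) t)
    (hvx : ∀ x t, HasDerivAt (fun y => (ρ y t)⁻¹ * Sx y t) (vx x t) x) :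
    ∀ x t,
      vt x t + (u x t - c x / ρ x t) * vx x t
        = c' x / (2 * c x) *
            ((2 * c x * (ρ x t)⁻¹ + (u x t + c x / ρ x t)) *
                ((ρ x t)⁻¹ * Sx x t)
              - (u x t - c x / ρ x t) * ((ρ x t)⁻¹ * Rx x t))
          + (c'' x * c x - c' x ^ 2) / (4 * c x ^ 2) * (ρ x t)⁻¹ *
              ((u x t + c x / ρ x t) ^ 2 - (u x t - c x / ρ x t) ^ 2) := by
  intro x t
  have hρ : ∀ y s, ρ y s ≠ 0 := fun y s => (hρpos y s).ne'
  have hρxt := hρ x t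
  have hcx : c x ≠ 0 := (hcpos x).ne'
  have hSC2 : ContDiff ℝ 2 (fun p : ℝ × ℝ => u p.1 p.2 + c p.1 / ρ p.1 p.2) :=
    huC2.add ((hcC2.comp contDiff_fst).div hρC2 fun p => hρ p.1 p.2)
  have hSt : ∀ y s, HasDerivAt (fun s => u y s + c y / ρ y s)
      (ut y s - c y * ρt y s / ρ y s ^ 2) s := fun y s =>
    ((hut y s).add ((hasDerivAt_const s (c y)).div (hρt y s) (hρ y s))).congr_deriv (by ring)
  have hchar : ∀ y, (ut y t - c y * ρt y t / ρ y t ^ 2) + (u y t - c y / ρ y t) * Sx y t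
      = c' y / (4 * c y) * ((u y t + c y / ρ y t) ^ 2 - (u y t - c y / ρ y t) ^ 2) := fun y => by
    rw [(hSx y t).unique ((hux y t).add ((hc y).div (hρx y t) (hρ y t)))]
    exact riemannInvariant_add_characteristic (hcpos y).ne' (hρ y t) (hmass y t) (hmom y t)
  have hSxt := (hρt x t).of_inv_mul hρxt (hvt x t)
  have hSxx := (hρx x t).of_inv_mul hρxt (hvx x t)
  have hdchar := ((hSC2.hasDerivAt_partial_comm hSx hSt hSxt).add ((hRx x t).mul hSxx))
    |>.congr_of_eventuallyEq (.of_forall fun y => (hchar y).symm)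
    |>.unique (((hc' x).div ((hc x).const_mul 4) (mul_ne_zero four_ne_zero hcx)).mul
      (((hSx x t).pow 2).sub ((hRx x t).pow 2)))
  norm_num only [Pi.div_apply, pow_one] at hdchar
  have htrans := density_transport_along_sub_characteristic (c := c x) (c' := c' x) hρxt
    (hmass x t)
  rw [← (hRx x t).unique ((hux x t).sub ((hc x).div (hρx x t) hρxt))] at htrans
  linear_combination (norm := skip) (ρ x t)⁻¹ * hdchar - (ρ x t)⁻¹ ^ 2 * Sx x t * htrans
  field_simp
  ring

/-- For C² solutions with ρ > 0, the gradient variable v = ρ⁻¹S_x satisfies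
v_t + R v_x = (c'/(2c))[(2cρ⁻¹ + S)v − Rw] + ((c''c − c'²)/(4c²))ρ⁻¹(S² − R²),
where w = ρ⁻¹R_x. -/
theorem stmt19 (T : ℝ) (hT : 0 < T)
    (c c' c'' : ℝ → ℝ)
    (hcC2 : ContDiff ℝ 2 c)
    (hc : ∀ x, HasDerivAt c (c' x) x)
    (hc' : ∀ x, HasDerivAt c' (c'' x) x)
    (hcpos : ∀ x, 0 < c x)
    (ρ u ρx ρt ux ut Sx Rx vt vx : ℝ → ℝ → ℝ)
    (hρC2 : ContDiff ℝ 2 (fun p : ℝ × ℝ => ρ p.1 p.2))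
    (huC2 : ContDiff ℝ 2 (fun p : ℝ × ℝ => u p.1 p.2))
    (hρpos : ∀ x t, 0 < ρ x t)
    (hρx : ∀ x t, HasDerivAt (fun y => ρ y t) (ρx x t) x)
    (hρt : ∀ x t, HasDerivAt (fun s => ρ x s) (ρt x t) t)
    (hux : ∀ x t, HasDerivAt (fun y => u y t) (ux x t) x)
    (hut : ∀ x t, HasDerivAt (fun s => u x s) (ut x t) t)
    (hmass : ∀ x t, ρt x t + u x t * ρx x t + ρ x t * ux x t = 0)
    (hmom : ∀ x t,
      ut x t + u x t * ux x t + c x ^ 2 * (ρ x t)⁻¹ ^ 3 * ρx x t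
        = c x * c' x * (ρ x t)⁻¹ ^ 2)
    (hSx : ∀ x t, HasDerivAt (fun y => u y t + c y / ρ y t) (Sx x t) x)
    (hRx : ∀ x t, HasDerivAt (fun y => u y t - c y / ρ y t) (Rx x t) x)
    (hvt : ∀ x t, HasDerivAt (fun s => (ρ x s)⁻¹ * Sx x s) (vt x t) t)
    (hvx : ∀ x t, HasDerivAt (fun y => (ρ y t)⁻¹ * Sx y t) (vx x t) x) :
    ∀ x t,
      vt x t + (u x t - c x / ρ x t) * vx x t
        = c' x / (2 * c x) *
            ((2 * c x * (ρ x t)⁻¹ + (u x t + c x / ρ x t)) *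
                ((ρ x t)⁻¹ * Sx x t)
              - (u x t - c x / ρ x t) * ((ρ x t)⁻¹ * Rx x t))
          + (c'' x * c x - c' x ^ 2) / (4 * c x ^ 2) * (ρ x t)⁻¹ *
              ((u x t + c x / ρ x t) ^ 2 - (u x t - c x / ρ x t) ^ 2) :=
  stmt19_general c c' c'' hcC2 hc hc' hcpos ρ u ρx ρt ux ut Sx Rx vt vx hρC2 huC2 hρpos hρx hρt hux
    hut hmass hmom hSx hRx hvt hvx
end
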